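/- Delsarte's covering radius bound: for any code C ⊆ F_q^n with external distance s' (the number of nonzero components B'_i with i ≥ 1 of the dual distance distribution), the covering radius ρ(C) = max_{x ∈ F_q^n} min_{c ∈ C} d(x,c) satisfies ρ(C) ≤ s'. -/

import Mathlib

open Finset

/-- Generalized binomial coefficient `C(z, j) = z(z-1)⋯(z-j+1)/j!` for real `z`. -/
noncomputable def realChoose (z : ℝ) (j : ℕ) : ℝ :=
  (∏ k ∈ Finset.range j, (z - k)) / (Nat.factorial j)

/-- The Krawtchouk polynomial `K_i^{(n,q)}(z)`. -/
noncomputable def kraw (n q i : ℕ) (z : ℝ) : ℝ :=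
  ∑ j ∈ Finset.range (i + 1),
    (-1 : ℝ) ^ j * ((q : ℝ) - 1) ^ (i - j) * (q : ℝ) ^ j *
      ((n - j).choose (n - i) : ℝ) * realChoose z j

/-- The distance distribution `B_i` of a code `C ⊆ F_q^n`. -/
noncomputable def distDistrib {n q : ℕ} (C : Finset (Fin n → Fin q)) (i : ℕ) : ℝ :=
  (((C ×ˢ C).filter (fun p => hammingDist p.1 p.2 = i)).card : ℝ) / (C.card : ℝ)

/-- The dual distance distribution (MacWilliams transform) `B'_i` of a code. -/
noncomputable def dualDistDistrib {n q : ℕ} (C : Finset (Fin n → Fin q)) (i : ℕ) : ℝ :=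
  (∑ j ∈ Finset.range (n + 1), distDistrib C j * kraw n q i j) / (C.card : ℝ)

/-!
Delsarte's annihilator argument. Identify `F_q` with `ℤ/qℤ` and let
`χ_u(x) = exp (2πi ⟨u, x⟩ / q)`. Summing `χ_u(y)` over the sphere `wt u = i` gives
`K_i(wt y)`, hence `|C|² B'_i = ∑_{wt u = i} |∑_{c ∈ C} χ_u(c)|²`: the character sums of `C`
vanish on every sphere with `B'_i = 0`. Let `P(z) = ∏ (z - i)` over the `s'` weights `i ≥ 1` with
`B'_i ≠ 0`. Expanding `P` in Krawtchouk polynomials shows that the Fourier transform of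
`u ↦ P(wt u)` vanishes outside the ball of radius `s'`, so if `x` were at distance `> s'` from
every codeword then `∑_u P(wt u) χ_u(-x) ∑_{c ∈ C} χ_u(c) = 0`. But only `u = 0` contributes to
this sum, which therefore equals `P(0) |C| ≠ 0`.
-/

section Krawtchouk

open Polynomial Nat

lemma realChoose_eq_eval_descPochhammer (z : ℝ) (j : ℕ) :
    realChoose z j = (descPochhammer ℝ j).eval z / j ! := by
  rw [realChoose, descPochhammer_eval_eq_prod_range]

lemma realChoose_natCast (d j : ℕ) : realChoose d j = d.choose j := by
  rw [realChoose_eq_eval_descPochhammer, descPochhammer_eval_eq_descFactorial,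
    descFactorial_eq_factorial_mul_choose, cast_mul, mul_div_cancel_left₀ _ (by positivity)]

noncomputable def krawPoly (n q i : ℕ) : ℝ[X] :=
  ∑ j ∈ range (i + 1),
    C ((-1) ^ j * ((q : ℝ) - 1) ^ (i - j) * (q : ℝ) ^ j * ((n - j).choose (n - i) : ℝ) / j !) *
      descPochhammer ℝ j

lemma krawPoly_eval (n q i : ℕ) (z : ℝ) : (krawPoly n q i).eval z = kraw n q i z := by
  simp only [krawPoly, kraw, eval_finsetSum, eval_mul, eval_C, realChoose_eq_eval_descPochhammer]
  exact sum_congr rfl fun j _ => by ring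

lemma degree_krawPoly (n : ℕ) {q : ℕ} (hq : q ≠ 0) (i : ℕ) : (krawPoly n q i).degree = i := by
  have hlead : ((-1) ^ i * ((q : ℝ) - 1) ^ (i - i) * (q : ℝ) ^ i *
      ((n - i).choose (n - i) : ℝ) / i !) ≠ 0 := by
    simp [hq, factorial_ne_zero]
  have htop : (C ((-1) ^ i * ((q : ℝ) - 1) ^ (i - i) * (q : ℝ) ^ i *
      ((n - i).choose (n - i) : ℝ) / i !) * descPochhammer ℝ i).degree = i := by
    rw [degree_C_mul hlead, degree_eq_natDegree (monic_descPochhammer ℝ i).ne_zero,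
      descPochhammer_natDegree]
  have hlow : ∑ j ∈ range i,
      C ((-1) ^ j * ((q : ℝ) - 1) ^ (i - j) * (q : ℝ) ^ j * ((n - j).choose (n - i) : ℝ) / j !) *
        descPochhammer ℝ j ∈ degreeLT ℝ i := by
    refine sum_mem fun j hj => mem_degreeLT.mpr ?_
    refine degree_le_natDegree.trans_lt (WithBot.coe_lt_coe.mpr ?_)
    exact (natDegree_C_mul_le _ _).trans_lt ((descPochhammer_natDegree ℝ j).trans_lt
      (mem_range.mp hj))
  rw [krawPoly, sum_range_succ, degree_add_eq_right_of_degree_lt (htop ▸ mem_degreeLT.mp hlow),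
    htop]

noncomputable def krawSeq (n : ℕ) {q : ℕ} (hq : q ≠ 0) : Polynomial.Sequence ℝ where
  elems' := krawPoly n q
  degree_eq' := degree_krawPoly n hq

lemma mem_span_krawPoly (n : ℕ) {q : ℕ} (hq : q ≠ 0) (P : ℝ[X]) :
    P ∈ Submodule.span ℝ (krawPoly n q '' Set.Iic P.natDegree) := by
  rw [show krawPoly n q = krawSeq n hq from rfl, Sequence.span_degreeLE _
    fun i _ => isUnit_iff_ne_zero.mpr (leadingCoeff_ne_zero.mpr ((krawSeq n hq).ne_zero i))]
  exact mem_degreeLE.mpr degree_le_natDegree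

lemma coeff_one_add_C_mul_X_pow {R : Type*} [CommSemiring R] (c : R) (m l : ℕ) :
    ((1 + C c * X) ^ m).coeff l = m.choose l * c ^ l := by
  have : (1 + C c * X) ^ m = ((1 + X) ^ m).comp (C c * X) := by simp
  rw [this, comp_C_mul_X_coeff, coeff_one_add_X_pow]

lemma coeff_one_sub_X_pow_mul_eq_kraw {n q i d : ℕ} (hi : i ≤ n) (hd : d ≤ n) :
    ((1 - X) ^ d * (1 + C ((q : ℂ) - 1) * X) ^ (n - d)).coeff i = (kraw n q i d : ℂ) := by
  set Y : ℂ[X] := 1 + C ((q : ℂ) - 1) * X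
  set t : ℕ → ℂ := fun j => (-1) ^ j * ((q : ℂ) - 1) ^ (i - j) * (q : ℂ) ^ j *
    ((n - j).choose (n - i) : ℂ) * (d.choose j : ℂ)
  -- `1 - X = Y - qX`, so `(1 - X)^d Y^(n-d) = ∑ j, (d choose j) (-q)^j X^j Y^(n-j)`
  have hexpand : (1 - X) ^ d * Y ^ (n - d) =
      ∑ j ∈ range (d + 1), C ((-(q : ℂ)) ^ j * d.choose j) * (X ^ j * Y ^ (n - j)) := by
    rw [show (1 - X : ℂ[X]) = C (-(q : ℂ)) * X + Y by simp only [Y, C_neg, C_sub, C_1]; ring,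
      add_pow, sum_mul]
    refine sum_congr rfl fun j hj => ?_
    have hjd : j ≤ d := Nat.lt_succ_iff.mp (mem_range.mp hj)
    rw [show n - j = (d - j) + (n - d) by omega, pow_add]
    simp only [C_mul, C_pow, Polynomial.C_eq_natCast, mul_pow]
    ring
  have hterm : ∀ j, (C ((-(q : ℂ)) ^ j * d.choose j) * (X ^ j * Y ^ (n - j))).coeff i =
      if j ≤ i then t j else 0 := by
    intro j
    rw [coeff_C_mul, coeff_X_pow_mul']
    split_ifs with hji
    · rw [coeff_one_add_C_mul_X_pow,
        choose_symm_of_eq_add (show n - j = (i - j) + (n - i) by omega), neg_pow]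
      ring
    · rw [mul_zero]
  have hlow : ∑ j ∈ range (d + 1), (if j ≤ i then t j else 0) =
      ∑ j ∈ range (n + 1), if j ≤ i then t j else 0 :=
    sum_subset (range_subset_range.mpr (by omega)) fun j _ hj => by
      simp [t, choose_eq_zero_of_lt (show d < j by simpa using hj)]
  have htop : ∑ j ∈ range (i + 1), t j = ∑ j ∈ range (n + 1), if j ≤ i then t j else 0 := by
    rw [← sum_filter]
    congr 1
    ext j
    simp only [mem_range, mem_filter]
    omega
  rw [hexpand, finsetSum_coeff, sum_congr rfl fun j _ => hterm j, hlow, ← htop]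
  simp [kraw, t, realChoose_natCast]

end Krawtchouk

section HammingWeight

open Polynomial

variable {ι β R : Type*} [Fintype ι] [DecidableEq ι] [Fintype β] [DecidableEq β] [Zero β]
  [CommSemiring R]

lemma sum_hammingNorm_eq_coeff_prod (g : ι → β → R) (i : ℕ) :
    ∑ u : ι → β with hammingNorm u = i, ∏ k, g k (u k) =
      (∏ k, (C (g k 0) + C (∑ a with a ≠ 0, g k a) * X)).coeff i := by
  have hfactor : ∀ k, C (g k 0) + C (∑ a with a ≠ 0, g k a) * X =
      ∑ a, C (g k a) * X ^ (if a = 0 then 0 else 1) := by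
    intro k
    rw [← add_sum_erase _ _ (mem_univ 0), filter_ne', map_sum, sum_mul]
    simp only [↓reduceIte, pow_zero, mul_one]
    exact congrArg _ (sum_congr rfl fun a ha => by rw [if_neg (ne_of_mem_erase ha), pow_one])
  have hmonomial : ∀ u : ι → β, ∏ k, C (g k (u k)) * X ^ (if u k = 0 then 0 else 1) =
      C (∏ k, g k (u k)) * X ^ hammingNorm u := by
    intro u
    rw [prod_mul_distrib, map_prod, prod_pow_eq_pow_sum, hammingNorm, card_filter]
    simp only [ite_not]
  simp_rw [hfactor, Fintype.prod_sum, hmonomial, finsetSum_coeff, coeff_C_mul_X_pow, sum_filter,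
    eq_comm]

end HammingWeight

lemma hammingNorm_neg {ι : Type*} [Fintype ι] {κ : ι → Type*} [∀ k, DecidableEq (κ k)]
    [∀ k, AddGroup (κ k)] (y : ∀ k, κ k) : hammingNorm (-y) = hammingNorm y :=
  hammingNorm_comp (fun _ => Neg.neg) (fun _ => neg_injective) fun _ => neg_zero

section DualCharacters

open Polynomial

variable {n q : ℕ} [NeZero q]

/-- The character `x ↦ exp (2πi ⟨u, x⟩ / q)` of `(ℤ/qℤ)ⁿ`. -/
noncomputable def dotChar (u : Fin n → Fin q) : AddChar (Fin n → Fin q) ℂ where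
  toFun x := ∏ k, ZMod.stdAddChar (ZMod.finEquiv q (u k) * ZMod.finEquiv q (x k))
  map_zero_eq_one' := by simp
  map_add_eq_mul' x y := by simp [mul_add, AddChar.map_add_eq_mul, prod_mul_distrib]

lemma dotChar_apply (u x : Fin n → Fin q) :
    dotChar u x = ∏ k, ZMod.stdAddChar (ZMod.finEquiv q (u k) * ZMod.finEquiv q (x k)) := rfl

lemma dotChar_comm (u x : Fin n → Fin q) : dotChar u x = dotChar x u := by
  simp only [dotChar_apply, mul_comm]

lemma sum_stdAddChar_finEquiv_mul (b : Fin q) :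
    ∑ a : Fin q, ZMod.stdAddChar (ZMod.finEquiv q a * ZMod.finEquiv q b) =
      if b = 0 then (q : ℂ) else 0 := by
  rw [Fintype.sum_bijective _ (ZMod.finEquiv q).bijective _
      (fun a => ZMod.stdAddChar (a * ZMod.finEquiv q b)) fun _ => rfl,
    AddChar.sum_mulShift _ (ZMod.isPrimitive_stdAddChar q), ZMod.card]
  simp [(ZMod.finEquiv q).map_eq_zero_iff]

lemma sum_dotChar (x : Fin n → Fin q) :
    ∑ u, dotChar u x = if x = 0 then (q : ℂ) ^ n else 0 := by
  simp only [dotChar_apply]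
  rw [← Fintype.prod_sum fun k a => ZMod.stdAddChar (ZMod.finEquiv q a * ZMod.finEquiv q (x k))]
  simp only [sum_stdAddChar_finEquiv_mul]
  split_ifs with hx
  · simp [hx]
  · obtain ⟨k, hk⟩ := Function.ne_iff.mp hx
    exact prod_eq_zero (mem_univ k) (if_neg hk)

lemma sum_dotChar_hammingNorm_eq_kraw {i : ℕ} (hi : i ≤ n) (y : Fin n → Fin q) :
    ∑ u with hammingNorm u = i, dotChar u y = kraw n q i (hammingNorm y) := by
  have hfactor : ∀ k, C (ZMod.stdAddChar (ZMod.finEquiv q 0 * ZMod.finEquiv q (y k))) +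
      C (∑ a with a ≠ 0, ZMod.stdAddChar (ZMod.finEquiv q a * ZMod.finEquiv q (y k))) * X =
      if y k = 0 then 1 + C ((q : ℂ) - 1) * X else 1 - X := by
    intro k
    rw [filter_ne', sum_erase_eq_sub (mem_univ 0), sum_stdAddChar_finEquiv_mul]
    split_ifs <;> simp [sub_eq_add_neg]
  have hweight : #{k | ¬y k = 0} = hammingNorm y := rfl
  have hzeros : #{k | y k = 0} = n - hammingNorm y := by
    have hsplit := card_filter_add_card_filter_not (s := univ) fun k => y k = 0
    rw [card_univ, Fintype.card_fin] at hsplit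
    omega
  simp only [dotChar_apply]
  rw [sum_hammingNorm_eq_coeff_prod
      fun k a => ZMod.stdAddChar (ZMod.finEquiv q a * ZMod.finEquiv q (y k)), prod_congr rfl
      fun k _ => hfactor k, prod_ite, prod_const, prod_const, hzeros, hweight, mul_comm]
  exact coeff_one_sub_X_pow_mul_eq_kraw hi (by simpa using hammingNorm_le_card_fintype (x := y))

lemma sum_kraw_mul_dotChar_eq_zero {j : ℕ} (hj : j ≤ n) {y : Fin n → Fin q}
    (hy : hammingNorm y ≠ j) : ∑ u, (kraw n q j (hammingNorm u) : ℂ) * dotChar u y = 0 := by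
  simp_rw [← sum_dotChar_hammingNorm_eq_kraw (q := q) hj, sum_mul]
  rw [sum_comm]
  refine sum_eq_zero fun w hw => ?_
  simp_rw [dotChar_comm w, ← AddChar.map_add_eq_mul, sum_dotChar]
  rw [if_neg]
  rintro hwy
  rw [eq_neg_of_add_eq_zero_left hwy, mem_filter, hammingNorm_neg] at hw
  exact hy hw.2

lemma sum_eval_mul_dotChar_eq_zero (P : ℝ[X]) {y : Fin n → Fin q}
    (hy : P.natDegree < hammingNorm y) :
    ∑ u, ((P.eval (hammingNorm u : ℝ) : ℝ) : ℂ) * dotChar u y = 0 := by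
  suffices ∀ p ∈ Submodule.span ℝ (krawPoly n q '' Set.Iic P.natDegree),
      ∑ u, ((p.eval (hammingNorm u : ℝ) : ℝ) : ℂ) * dotChar u y = 0 from
    this P (mem_span_krawPoly n (NeZero.ne q) P)
  intro p hp
  induction hp using Submodule.span_induction with
  | mem p hp =>
    obtain ⟨j, hj, rfl⟩ := hp
    have hjy : j < hammingNorm y := lt_of_le_of_lt hj hy
    simp_rw [krawPoly_eval]
    exact sum_kraw_mul_dotChar_eq_zero
      (hjy.le.trans (by simpa using hammingNorm_le_card_fintype (x := y))) hjy.ne'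
  | zero => simp
  | add p p' _ _ hp hp' => simp [add_mul, sum_add_distrib, hp, hp']
  | smul a p _ hp => simp [mul_assoc, ← mul_sum, hp]

end DualCharacters

section Code

variable {n q : ℕ}

lemma sum_kraw_hammingDist_eq_sq_mul_dualDistDistrib (C : Finset (Fin n → Fin q)) (i : ℕ) :
    ∑ p ∈ C ×ˢ C, kraw n q i (hammingDist p.1 p.2) = (#C : ℝ) ^ 2 * dualDistDistrib C i := by
  rcases C.eq_empty_or_nonempty with rfl | hC
  · simp
  have hC0 : (#C : ℝ) ≠ 0 := Nat.cast_ne_zero.mpr hC.card_pos.ne'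
  have hdist : ∀ p ∈ C ×ˢ C, hammingDist p.1 p.2 ∈ range (n + 1) := fun p _ =>
    mem_range.mpr (Nat.lt_succ_of_le (by simpa using hammingDist_le_card_fintype (x := p.1)))
  rw [← sum_fiberwise_of_maps_to hdist, dualDistDistrib, sum_div, mul_sum]
  refine sum_congr rfl fun j _ => ?_
  rw [sum_congr rfl fun p hp => by rw [(mem_filter.mp hp).2], sum_const, nsmul_eq_mul,
    distDistrib]
  field_simp

variable [NeZero q]

lemma sum_normSq_eq_sum_kraw (C : Finset (Fin n → Fin q)) {i : ℕ} (hi : i ≤ n) :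
    ∑ u with hammingNorm u = i, Complex.normSq (∑ c ∈ C, dotChar u c) =
      ∑ p ∈ C ×ˢ C, kraw n q i (hammingDist p.1 p.2) := by
  apply Complex.ofReal_injective
  push_cast
  simp_rw [Complex.normSq_eq_conj_mul_self, map_sum, sum_mul_sum, ← AddChar.map_neg_eq_conj,
    ← AddChar.map_add_eq_mul]
  rw [sum_product, sum_comm]
  refine sum_congr rfl fun c _ => ?_
  rw [sum_comm]
  refine sum_congr rfl fun c' _ => ?_
  rw [sum_dotChar_hammingNorm_eq_kraw hi, ← hammingDist_eq_hammingNorm]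

lemma sum_dotChar_eq_zero_of_dualDistDistrib_eq_zero (C : Finset (Fin n → Fin q))
    {u : Fin n → Fin q} (hB : dualDistDistrib C (hammingNorm u) = 0) :
    ∑ c ∈ C, dotChar u c = 0 := by
  have h := sum_normSq_eq_sum_kraw C (by simpa using hammingNorm_le_card_fintype (x := u))
  rw [sum_kraw_hammingDist_eq_sq_mul_dualDistDistrib, hB, mul_zero,
    sum_eq_zero_iff_of_nonneg fun _ _ => Complex.normSq_nonneg _] at h
  exact Complex.normSq_eq_zero.mp (h u (mem_filter.mpr ⟨mem_univ u, rfl⟩))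

lemma sum_eval_mul_dotChar_neg_mul_sum_eq_eval_zero_mul_card (C : Finset (Fin n → Fin q))
    (P : Polynomial ℝ) (x : Fin n → Fin q) (hP : ∀ i ∈ Icc 1 n, dualDistDistrib C i ≠ 0 → P.eval (i : ℝ) = 0) :
    ∑ u, ((P.eval (hammingNorm u : ℝ) : ℝ) : ℂ) * (dotChar u (-x) * ∑ c ∈ C, dotChar u c) =
      P.eval 0 * #C := by
  rw [sum_eq_single 0 (fun u _ hu => ?_) (by simp)]
  · simp [dotChar_apply]
  by_cases hB : dualDistDistrib C (hammingNorm u) = 0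
  · rw [sum_dotChar_eq_zero_of_dualDistDistrib_eq_zero C hB, mul_zero, mul_zero]
  · have hu : hammingNorm u ∈ Icc 1 n := mem_Icc.mpr ⟨hammingNorm_pos_iff.mpr hu,
      by simpa using hammingNorm_le_card_fintype (x := u)⟩
    rw [hP _ hu hB, Complex.ofReal_zero, zero_mul]

lemma sum_eval_mul_dotChar_neg_mul_sum_eq_zero (C : Finset (Fin n → Fin q)) (P : Polynomial ℝ)
    (x : Fin n → Fin q) (hfar : ∀ c ∈ C, P.natDegree < hammingDist x c) :
    ∑ u, ((P.eval (hammingNorm u : ℝ) : ℝ) : ℂ) * (dotChar u (-x) * ∑ c ∈ C, dotChar u c) = 0 := by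
  simp_rw [mul_sum, ← AddChar.map_add_eq_mul]
  rw [sum_comm]
  refine sum_eq_zero fun c hc => sum_eval_mul_dotChar_eq_zero P ?_
  rw [← hammingDist_eq_hammingNorm]
  exact hfar c hc

end Code

theorem delsarte_covering_radius_bound_general (n q : ℕ) (hq : 2 ≤ q)
    (C : Finset (Fin n → Fin q)) (hC : C.Nonempty)
    (s' : ℕ)
    (hs' : s' = ((Finset.Icc 1 n).filter (fun i => dualDistDistrib C i ≠ 0)).card) :
    ∀ x : Fin n → Fin q, ∃ c ∈ C, hammingDist x c ≤ s' := by
  have : NeZero q := ⟨by omega⟩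
  intro x
  by_contra! hfar
  set S := (Icc 1 n).filter fun i => dualDistDistrib C i ≠ 0
  let P : Polynomial ℝ := ∏ α ∈ S, (Polynomial.X - Polynomial.C (α : ℝ))
  have hPdeg : P.natDegree = s' := by
    rw [hs']
    exact Polynomial.natDegree_finsetProd_X_sub_C_eq_card _ _
  have hP0 : P.eval 0 ≠ 0 := by
    rw [Polynomial.eval_prod, prod_ne_zero_iff]
    intro α hα
    simpa [Nat.one_le_iff_ne_zero] using (mem_Icc.mp (mem_filter.mp hα).1).1
  have hPS : ∀ i ∈ Icc 1 n, dualDistDistrib C i ≠ 0 → P.eval (i : ℝ) = 0 := fun i hi hB => by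
    rw [Polynomial.eval_prod]
    exact prod_eq_zero (mem_filter.mpr ⟨hi, hB⟩) (by simp)
  have hfourier := sum_eval_mul_dotChar_neg_mul_sum_eq_zero C P x (hPdeg ▸ hfar)
  rw [sum_eval_mul_dotChar_neg_mul_sum_eq_eval_zero_mul_card C P x hPS] at hfourier
  exact mul_ne_zero (by exact_mod_cast hP0) (by exact_mod_cast hC.card_pos.ne') hfourier

theorem delsarte_covering_radius_bound (n q : ℕ) (hn : 1 ≤ n) (hq : 2 ≤ q)
    (C : Finset (Fin n → Fin q)) (hC : C.Nonempty)
    (s' : ℕ)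
    (hs' : s' = ((Finset.Icc 1 n).filter (fun i => dualDistDistrib C i ≠ 0)).card) :
    ∀ x : Fin n → Fin q, ∃ c ∈ C, hammingDist x c ≤ s' :=
  delsarte_covering_radius_bound_general n q hq C hC s' hs'
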